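/- arXiv:2504.15196 — 5 statements merged into one kernel-verified Lean document; each statement's English description precedes it below -/
import Mathlib

section
/- Consider the adaptive stepsize recursion α^{k+1} = min{1/(2γL^k), √(1+θ^k)·α^k} with θ^{k+1} = α^{k+1}/α^k, where each local-smoothness estimate satisfies μ ≤ L^k ≤ L for constants 0 < μ ≤ L and γ > 0. If the initial stepsize satisfies 1/(2γL) ≤ α^0 ≤ 1/(2γμ), then 1/(2γL) ≤ α^k ≤ 1/(2γμ) for all k ≥ 0. -/
/-- The adaptive stepsize recursion `α^{k+1} = min{1/(2γL^k), √(1+θ^k)·α^k}`,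
`θ^{k+1} = α^{k+1}/α^k`, with local-smoothness estimates `μ ≤ L^k ≤ L`
(`0 < μ ≤ L`, `γ > 0`) keeps every stepsize in `[1/(2γL), 1/(2γμ)]`,
provided the initial stepsize lies in this interval. -/
theorem adaptive_stepsize_bounds (γ μ L : ℝ) (hγ : 0 < γ) (hμ : 0 < μ) (hμL : μ ≤ L)
    (α θ Lest : ℕ → ℝ)
    (hLest : ∀ k, μ ≤ Lest k ∧ Lest k ≤ L)
    (hθ0 : 0 ≤ θ 0)
    (hαrec : ∀ k, α (k + 1) = min (1 / (2 * γ * Lest k)) (Real.sqrt (1 + θ k) * α k))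
    (hθrec : ∀ k, θ (k + 1) = α (k + 1) / α k)
    (hα0 : 1 / (2 * γ * L) ≤ α 0 ∧ α 0 ≤ 1 / (2 * γ * μ)) :
    ∀ k, 1 / (2 * γ * L) ≤ α k ∧ α k ≤ 1 / (2 * γ * μ) := by
  have hL : 0 < L := lt_of_lt_of_le hμ hμL
  have hstrong : ∀ k, 0 ≤ θ k ∧ 1 / (2 * γ * L) ≤ α k ∧ α k ≤ 1 / (2 * γ * μ) := by
    intro k
    induction k with
    | zero => exact ⟨hθ0, hα0⟩
    | succ n ih =>
      obtain ⟨hθn, hlo, hhi⟩ := ih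
      have hLen := hLest n
      have hLenpos : 0 < Lest n := lt_of_lt_of_le hμ hLen.1
      have hαpos : 0 < α n := lt_of_lt_of_le (by positivity) hlo
      have hsq : (1 : ℝ) ≤ Real.sqrt (1 + θ n) := by
        have h11 : Real.sqrt 1 ≤ Real.sqrt (1 + θ n) := Real.sqrt_le_sqrt (by linarith)
        simpa using h11
      have h1 : 1 / (2 * γ * L) ≤ α (n + 1) := by
        rw [hαrec n]
        refine le_min ?_ ?_
        · apply one_div_le_one_div_of_le (by positivity)
          have := hLen.2; nlinarith
        · nlinarith
      have h2 : α (n + 1) ≤ 1 / (2 * γ * μ) := by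
        rw [hαrec n]
        refine le_trans (min_le_left _ _) ?_
        apply one_div_le_one_div_of_le (by positivity)
        have := hLen.1; nlinarith
      have h3 : 0 ≤ θ (n + 1) := by
        rw [hθrec n]
        have : 0 < α (n + 1) := lt_of_lt_of_le (by positivity) h1
        positivity
      exact ⟨h3, h1, h2⟩
  exact fun k => (hstrong k).2
end

section
/- Gradient-tracking consensus error bound: with y^{k+1} = Wy^k + ∇f(x^{k+1}) - ∇f(x^k), where ∇f applies the L-Lipschitz gradients coordinatewise, ŷ^k = (I - 11ᵀ/n)y^k, and x̄^{k+1} - x̄^k = -(1/n)11ᵀ(α^k ⊙ y^k), one has ‖ŷ^{k+1}‖ ≤ λ‖ŷ^k‖ + L(‖x̂^{k+1}‖ + ‖(1/n)11ᵀ(α^k ⊙ y^k)‖ + ‖x̂^k‖), provided ‖W - 11ᵀ/n‖ ≤ λ. -/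
/-!
With `J = 11ᵀ/n`, column and row stochasticity of `W` give `JW = WJ = J`, hence
`(I - J)W = (W - J)(I - J)` and `ŷ^{k+1} = (W - J)ŷ^k + (I - J)(∇f(x^{k+1}) - ∇f(x^k))`.
Since `I - J` is an orthogonal projection it does not increase norms, the gradient difference is
bounded by `L‖x^{k+1} - x^k‖`, and the triangle inequality through `x̄^{k+1}` and `x̄^k` splits
`‖x^{k+1} - x^k‖` into the three terms of the bound.
-/

open Matrix

lemma one_sub_mul_eq_sub_mul_one_sub {R : Type*} [Ring R] {J W : R}
    (hJW : J * W = J) (hWJ : W * J = J) (hJ : J * J = J) :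
    (1 - J) * W = (W - J) * (1 - J) := by
  rw [sub_mul, one_mul, hJW, mul_sub, mul_one, sub_mul, hWJ, hJ, sub_self, sub_zero]

noncomputable def averagingMatrix (ι : Type*) [Fintype ι] : Matrix ι ι ℝ :=
  (Fintype.card ι : ℝ)⁻¹ • Matrix.of fun _ _ => 1

section Averaging

variable {ι : Type*} [Fintype ι]

lemma averagingMatrix_mul_self : averagingMatrix ι * averagingMatrix ι = averagingMatrix ι := by
  ext i j
  have : Nonempty ι := ⟨i⟩
  simp [averagingMatrix, Matrix.mul_apply]

lemma isStarProjection_averagingMatrix : IsStarProjection (averagingMatrix ι) :=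
  ⟨averagingMatrix_mul_self, by ext; simp [averagingMatrix]⟩

lemma mul_averagingMatrix {W : Matrix ι ι ℝ} (hrow : ∀ i, ∑ j, W i j = 1) :
    W * averagingMatrix ι = averagingMatrix ι := by
  ext i j
  simp [averagingMatrix, Matrix.mul_apply, ← Finset.sum_mul, hrow]

lemma averagingMatrix_mul {W : Matrix ι ι ℝ} (hcol : ∀ j, ∑ i, W i j = 1) :
    averagingMatrix ι * W = averagingMatrix ι := by
  ext i j
  simp [averagingMatrix, Matrix.mul_apply, ← Finset.mul_sum, hcol]

variable [DecidableEq ι]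

lemma toEuclideanCLM_one_sub_averagingMatrix_apply (u : EuclideanSpace ℝ ι) :
    toEuclideanCLM (𝕜 := ℝ) (1 - averagingMatrix ι) u
      = u - WithLp.toLp 2 (fun _ => (∑ i, u i) / Fintype.card ι) := by
  ext i
  simp [averagingMatrix, Matrix.mulVec, dotProduct, ← Finset.mul_sum, div_eq_inv_mul]

lemma norm_toEuclideanCLM_one_sub_averagingMatrix_le :
    ‖toEuclideanCLM (𝕜 := ℝ) (n := ι) (1 - averagingMatrix ι)‖ ≤ 1 :=
  (isStarProjection_averagingMatrix.one_sub.map _).norm_le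

lemma norm_toEuclideanCLM_one_sub_averagingMatrix_apply_add_le {W : Matrix ι ι ℝ}
    (hrow : ∀ i, ∑ j, W i j = 1) (hcol : ∀ j, ∑ i, W i j = 1) (y d : EuclideanSpace ℝ ι) :
    ‖toEuclideanCLM (𝕜 := ℝ) (1 - averagingMatrix ι) (toEuclideanCLM (𝕜 := ℝ) W y + d)‖
      ≤ ‖toEuclideanCLM (𝕜 := ℝ) (W - averagingMatrix ι)‖
          * ‖toEuclideanCLM (𝕜 := ℝ) (1 - averagingMatrix ι) y‖ + ‖d‖ := by
  set P := toEuclideanCLM (𝕜 := ℝ) (1 - averagingMatrix ι)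
  have hcomm : P (toEuclideanCLM (𝕜 := ℝ) W y)
      = toEuclideanCLM (𝕜 := ℝ) (W - averagingMatrix ι) (P y) := by
    rw [← mul_apply_eq_comp, ← map_mul, one_sub_mul_eq_sub_mul_one_sub
      (averagingMatrix_mul hcol) (mul_averagingMatrix hrow) averagingMatrix_mul_self, map_mul,
      mul_apply_eq_comp]
  have hd : ‖P d‖ ≤ ‖d‖ :=
    (P.le_opNorm d).trans
      (mul_le_of_le_one_left (norm_nonneg d) norm_toEuclideanCLM_one_sub_averagingMatrix_le)
  rw [map_add, hcomm]
  exact (norm_add_le _ _).trans (add_le_add (ContinuousLinearMap.le_opNorm _ _) hd)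

end Averaging

lemma norm_toLp_comp_sub_le {ι : Type*} [Fintype ι] {g : ι → ℝ → ℝ} {L : ℝ} (hL : 0 ≤ L)
    (hg : ∀ i a b, |g i a - g i b| ≤ L * |a - b|) (u v : EuclideanSpace ℝ ι) :
    ‖WithLp.toLp 2 (fun i => g i (u i)) - WithLp.toLp 2 (fun i => g i (v i))‖ ≤ L * ‖u - v‖ := by
  refine le_of_pow_le_pow_left₀ two_ne_zero (by positivity) ?_
  rw [mul_pow, EuclideanSpace.real_norm_sq_eq, EuclideanSpace.real_norm_sq_eq, Finset.mul_sum]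
  refine Finset.sum_le_sum fun i _ => ?_
  simp only [PiLp.sub_apply]
  rw [← sq_abs, ← sq_abs (u i - v i), ← mul_pow]
  exact pow_le_pow_left₀ (abs_nonneg _) (hg i (u i) (v i)) 2

theorem consensus_error_bound_y_general (n : ℕ)
    (W : Matrix (Fin n) (Fin n) ℝ)
    (hrow : ∀ i, ∑ j, W i j = 1)
    (hcol : ∀ j, ∑ i, W i j = 1)
    (lam L : ℝ) (hL : 0 ≤ L)
    (hWtilde : ‖Matrix.toEuclideanCLM (𝕜 := ℝ) (n := Fin n)
        (W - (n : ℝ)⁻¹ • Matrix.of (fun _ _ => (1 : ℝ)))‖ ≤ lam)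
    (g : Fin n → ℝ → ℝ)
    (hg : ∀ i a b, |g i a - g i b| ≤ L * |a - b|)
    (x x' y y' α : EuclideanSpace ℝ (Fin n))
    (hy' : y' = Matrix.toEuclideanCLM (𝕜 := ℝ) (n := Fin n) W y
        + ((WithLp.equiv 2 (Fin n → ℝ)).symm fun i => g i (x' i))
        - ((WithLp.equiv 2 (Fin n → ℝ)).symm fun i => g i (x i)))
    (xbar x'bar ybar y'bar : EuclideanSpace ℝ (Fin n))
    (hybar : ybar = WithLp.toLp 2 (fun _ => (∑ i, y i) / n))
    (hy'bar : y'bar = WithLp.toLp 2 (fun _ => (∑ i, y' i) / n))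
    (hxstep : x'bar - xbar
      = -((WithLp.equiv 2 (Fin n → ℝ)).symm fun _ => (∑ i, α i * y i) / n)) :
    ‖y' - y'bar‖ ≤ lam * ‖y - ybar‖
      + L * (‖x' - x'bar‖
        + ‖(WithLp.equiv 2 (Fin n → ℝ)).symm fun _ => (∑ i, α i * y i) / n‖
        + ‖x - xbar‖) := by
  have hJ : (n : ℝ)⁻¹ • Matrix.of (fun _ _ => (1 : ℝ)) = averagingMatrix (Fin n) := by
    simp [averagingMatrix]
  have hdev (u : EuclideanSpace ℝ (Fin n)) : u - WithLp.toLp 2 (fun _ => (∑ i, u i) / n)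
      = toEuclideanCLM (𝕜 := ℝ) (1 - averagingMatrix (Fin n)) u := by
    rw [toEuclideanCLM_one_sub_averagingMatrix_apply, Fintype.card_fin]
  have hx : ‖x' - x‖ ≤ ‖x' - x'bar‖ + ‖x'bar - xbar‖ + ‖x - xbar‖ := by
    calc ‖x' - x‖ ≤ ‖x' - x'bar‖ + ‖x'bar - x‖ := norm_sub_le_norm_sub_add_norm_sub _ _ _
      _ ≤ ‖x' - x'bar‖ + (‖x'bar - xbar‖ + ‖xbar - x‖) := by
          gcongr; exact norm_sub_le_norm_sub_add_norm_sub _ _ _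
      _ = _ := by rw [norm_sub_rev xbar, add_assoc]
  rw [hxstep, norm_neg] at hx
  rw [hJ] at hWtilde
  rw [hy'bar, hybar, hdev, hdev, hy', add_sub_assoc]
  calc _ ≤ _ := norm_toEuclideanCLM_one_sub_averagingMatrix_apply_add_le hrow hcol _ _
    _ ≤ lam * _ + L * ‖x' - x‖ := by
        gcongr
        exact norm_toLp_comp_sub_le hL hg x' x
    _ ≤ _ := by gcongr

/-- Gradient-tracking consensus error bound: with
`y^{k+1} = Wy^k + ∇f(x^{k+1}) - ∇f(x^k)` where `∇f` applies the `L`-Lipschitz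
local derivatives coordinatewise, `‖W - 11ᵀ/n‖ ≤ λ` (spectral norm), and
`x̄^{k+1} - x̄^k = -(1/n)11ᵀ(α^k ⊙ y^k)`, one has
`‖ŷ^{k+1}‖ ≤ λ‖ŷ^k‖ + L(‖x̂^{k+1}‖ + ‖(1/n)11ᵀ(α^k ⊙ y^k)‖ + ‖x̂^k‖)`. -/
theorem consensus_error_bound_y (n : ℕ) (hn : 0 < n)
    (W : Matrix (Fin n) (Fin n) ℝ)
    (hnonneg : ∀ i j, 0 ≤ W i j)
    (hrow : ∀ i, ∑ j, W i j = 1)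
    (hcol : ∀ j, ∑ i, W i j = 1)
    (lam L : ℝ) (hL : 0 ≤ L)
    (hWtilde : ‖Matrix.toEuclideanCLM (𝕜 := ℝ) (n := Fin n)
        (W - (n : ℝ)⁻¹ • Matrix.of (fun _ _ => (1 : ℝ)))‖ ≤ lam)
    (g : Fin n → ℝ → ℝ)
    (hg : ∀ i a b, |g i a - g i b| ≤ L * |a - b|)
    (x x' y y' α : EuclideanSpace ℝ (Fin n))
    (hy' : y' = Matrix.toEuclideanCLM (𝕜 := ℝ) (n := Fin n) W y
        + ((WithLp.equiv 2 (Fin n → ℝ)).symm fun i => g i (x' i))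
        - ((WithLp.equiv 2 (Fin n → ℝ)).symm fun i => g i (x i)))
    (xbar x'bar ybar y'bar : EuclideanSpace ℝ (Fin n))
    (hxbar : xbar = WithLp.toLp 2 (fun _ => (∑ i, x i) / n))
    (hx'bar : x'bar = WithLp.toLp 2 (fun _ => (∑ i, x' i) / n))
    (hybar : ybar = WithLp.toLp 2 (fun _ => (∑ i, y i) / n))
    (hy'bar : y'bar = WithLp.toLp 2 (fun _ => (∑ i, y' i) / n))
    (hxstep : x'bar - xbar
      = -((WithLp.equiv 2 (Fin n → ℝ)).symm fun _ => (∑ i, α i * y i) / n)) :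
    ‖y' - y'bar‖ ≤ lam * ‖y - ybar‖
      + L * (‖x' - x'bar‖
        + ‖(WithLp.equiv 2 (Fin n → ℝ)).symm fun _ => (∑ i, α i * y i) / n‖
        + ‖x - xbar‖) :=
  consensus_error_bound_y_general n W hrow hcol lam L hL hWtilde g hg x x' y y' α hy' xbar x'bar
    ybar y'bar hybar hy'bar hxstep
end

section
/- For vectors ᾱ (constant vector with mean value > 0), ȳ (constant vector), and deviation vectors α̂, ŷ ∈ ℝⁿ, setting v = ᾱ⊙ȳ + (1/n)11ᵀ(α̂⊙ŷ), α_max ≥ the entry of ᾱ, and δ_α ≥ ‖α̂‖/‖ᾱ‖, one has ȳᵀv ≥ (1/α_max)‖v‖² - δ_α‖ŷ‖·‖v‖. -/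
/-!
Write `v = ā • ȳ + w`, where `w` is the constant vector with entry `⟪α̂, ŷ⟫ / n`; this is the
covariance identity `mean (α ⊙ y) = ā · mean y + ⟪α̂, ŷ⟫ / n`. Then
`ā ⟪ȳ, v⟫ = ‖v‖² - ⟪w, v⟫ ≥ ‖v‖² - ‖w‖ ‖v‖`, and Cauchy–Schwarz gives
`‖w‖ ≤ ‖α̂‖ ‖ŷ‖ / √n ≤ δ_α ‖ᾱ‖ ‖ŷ‖ / √n = δ_α ā ‖ŷ‖`. Dividing by `ā` and using `1 / α_max ≤ 1 / ā`
gives the bound.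
-/

open Finset RealInnerProductSpace

theorem one_div_mul_norm_sq_sub_le_inner_of_eq_smul_add {E : Type*} [NormedAddCommGroup E]
    [InnerProductSpace ℝ E] {a αmax δ r : ℝ} {u v w : E} (ha : 0 < a) (hle : a ≤ αmax)
    (hv : v = a • u + w) (hw : ‖w‖ ≤ δ * a * r) :
    (1 / αmax) * ‖v‖ ^ 2 - δ * r * ‖v‖ ≤ ⟪u, v⟫ := by
  have hau : a * ⟪u, v⟫ = ‖v‖ ^ 2 - ⟪w, v⟫ := by
    rw [← real_inner_self_eq_norm_sq, ← real_inner_smul_left, ← inner_sub_left, hv,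
      add_sub_cancel_right]
  have hwv : ⟪w, v⟫ ≤ δ * a * r * ‖v‖ :=
    (real_inner_le_norm w v).trans (mul_le_mul_of_nonneg_right hw (norm_nonneg v))
  have hinv : 1 / αmax ≤ 1 / a := one_div_le_one_div_of_le ha hle
  have hdiv : (1 / a) * ‖v‖ ^ 2 - δ * r * ‖v‖ ≤ ⟪u, v⟫ := by
    rw [← mul_le_mul_iff_of_pos_left ha]
    field_simp
    linarith
  nlinarith [sq_nonneg ‖v‖]

theorem sum_mul_eq_card_mul_add_sum_sub_mul_sub {ι : Type*} [Fintype ι] (f g : ι → ℝ) {a b : ℝ}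
    (ha : ∑ i, f i = Fintype.card ι * a) (hb : ∑ i, g i = Fintype.card ι * b) :
    ∑ i, f i * g i = Fintype.card ι * (a * b) + ∑ i, (f i - a) * (g i - b) := by
  simp only [sub_mul, mul_sub, sum_sub_distrib, ← sum_mul, ← mul_sum, sum_const, card_univ,
    nsmul_eq_mul, ha, hb]
  ring

theorem EuclideanSpace.norm_toLp_const {ι : Type*} [Fintype ι] (c : ℝ) :
    ‖(WithLp.toLp 2 (fun _ : ι => c) : EuclideanSpace ℝ ι)‖ = √(Fintype.card ι) * |c| := by
  simp [EuclideanSpace.norm_eq, Real.sqrt_mul, Real.sqrt_sq_eq_abs]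

theorem EuclideanSpace.norm_toLp_inner_div_card_le {ι : Type*} [Fintype ι]
    (x y : EuclideanSpace ℝ ι) :
    ‖(WithLp.toLp 2 (fun _ : ι => ⟪x, y⟫ / Fintype.card ι) : EuclideanSpace ℝ ι)‖
      ≤ ‖x‖ * ‖y‖ / √(Fintype.card ι) := by
  rw [norm_toLp_const, abs_div, Nat.abs_cast, mul_div_left_comm, Real.sqrt_div_self',
    mul_one_div]
  gcongr
  exact abs_real_inner_le_norm x y

/-- For `ᾱ = ā·𝟙` with `0 < ā ≤ α_max`, `ȳ` the constant mean vector of `y`,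
deviations `α̂ = α - ᾱ`, `ŷ = y - ȳ`, and
`v = (1/n)11ᵀ(α⊙y) = ᾱ⊙ȳ + (1/n)11ᵀ(α̂⊙ŷ)`, with `δ_α ≥ ‖α̂‖/‖ᾱ‖`, one has
`⟪ȳ, v⟫ ≥ (1/α_max)‖v‖² - δ_α‖ŷ‖·‖v‖`. -/
theorem inner_ybar_avg_hadamard_lower_bound (n : ℕ) (hn : 0 < n)
    (abar αmax δα : ℝ) (habar : 0 < abar) (hle : abar ≤ αmax)
    (α y αbar ybar αhat yhat v : EuclideanSpace ℝ (Fin n))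
    (hαbar : αbar = WithLp.toLp 2 (fun _ => abar))
    (hmean : (∑ i, α i) / n = abar)
    (hybar : ybar = WithLp.toLp 2 (fun _ => (∑ i, y i) / n))
    (hαhat : αhat = α - αbar) (hyhat : yhat = y - ybar)
    (hv : v = ((WithLp.equiv 2 (Fin n → ℝ)).symm fun _ => (∑ i, α i * y i) / n))
    (hδ : ‖αhat‖ / ‖αbar‖ ≤ δα) :
    (1 / αmax) * ‖v‖ ^ 2 - δα * ‖yhat‖ * ‖v‖ ≤ inner ℝ ybar v := by
  have hn' : (n : ℝ) ≠ 0 := Nat.cast_ne_zero.2 hn.ne'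
  have hsum_α : ∑ i, α i = n * abar := by rw [← hmean, mul_div_cancel₀ _ hn']
  have hsum_y : ∑ i, y i = n * ((∑ i, y i) / n) := (mul_div_cancel₀ _ hn').symm
  have hv_decomp : v = abar • ybar + WithLp.toLp 2 (fun _ => ⟪αhat, yhat⟫ / n) := by
    ext i
    simp only [hv, hybar, hαhat, hyhat, hαbar, WithLp.equiv_symm_apply, PiLp.add_apply,
      PiLp.smul_apply, smul_eq_mul, PiLp.inner_apply, PiLp.sub_apply, RCLike.inner_apply,
      Real.ringHom_apply, sum_mul_eq_card_mul_add_sum_sub_mul_sub α y (by simpa using hsum_α)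
      (by simpa using hsum_y), Fintype.card_fin, mul_comm]
    field_simp
  have hαbar_norm : ‖αbar‖ = √n * abar := by
    rw [hαbar, EuclideanSpace.norm_toLp_const, abs_of_pos habar, Fintype.card_fin]
  have hw : ‖(WithLp.toLp 2 (fun _ => ⟪αhat, yhat⟫ / n) : EuclideanSpace ℝ (Fin n))‖
      ≤ δα * abar * ‖yhat‖ :=
    calc _ ≤ ‖αhat‖ * ‖yhat‖ / √n := by
          simpa using EuclideanSpace.norm_toLp_inner_div_card_le αhat yhat
      _ ≤ δα * ‖αbar‖ * ‖yhat‖ / √n := by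
          gcongr
          exact (div_le_iff₀ (by rw [hαbar_norm]; positivity)).1 hδ
      _ = δα * abar * ‖yhat‖ := by
          rw [hαbar_norm]
          field_simp
  exact one_div_mul_norm_sq_sub_le_inner_of_eq_smul_add habar hle hv_decomp hw
end

section
/- Let (s^k)_{k≥0} and (t^k)_{k≥0} be sequences of nonnegative reals satisfying s^{k+1} ≤ λs^k + t^k with λ ∈ (0,1). Define Υ^k = √(Σ_{i=0}^k (s^i)²) and Ψ^k = √(Σ_{i=0}^k (t^i)²). Then for every k ≥ 0, Υ^k ≤ (√2/(1-λ))·Ψ^k + (√2/(1-λ²))·s^0. -/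
private lemma sqrt_add_le' {a b : ℝ} (ha : 0 ≤ a) (hb : 0 ≤ b) :
    Real.sqrt (a + b) ≤ Real.sqrt a + Real.sqrt b := by
  rw [← Real.sqrt_sq (by positivity : (0:ℝ) ≤ Real.sqrt a + Real.sqrt b)]
  apply Real.sqrt_le_sqrt
  nlinarith [Real.sq_sqrt ha, Real.sq_sqrt hb, Real.sqrt_nonneg a, Real.sqrt_nonneg b]

/-- If nonnegative sequences satisfy `s^{k+1} ≤ λ s^k + t^k` with `λ ∈ (0,1)`, then
the ℓ²-partial sums `Υ^k = √(Σ_{i≤k} (s^i)²)` and `Ψ^k = √(Σ_{i≤k} (t^i)²)` satisfy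
`Υ^k ≤ (√2/(1-λ))Ψ^k + (√2/(1-λ²))s^0` for every `k ≥ 0`. -/
theorem l2_partial_sum_bound (lam : ℝ) (hlam : 0 < lam) (hlam1 : lam < 1)
    (s t : ℕ → ℝ) (hs : ∀ k, 0 ≤ s k) (ht : ∀ k, 0 ≤ t k)
    (hrec : ∀ k, s (k + 1) ≤ lam * s k + t k) :
    ∀ k, Real.sqrt (∑ i ∈ Finset.range (k + 1), (s i) ^ 2)
      ≤ (Real.sqrt 2 / (1 - lam)) * Real.sqrt (∑ i ∈ Finset.range (k + 1), (t i) ^ 2)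
        + (Real.sqrt 2 / (1 - lam ^ 2)) * s 0 := by
  intro k
  have h1 : (0:ℝ) < 1 - lam := by linarith
  have hz : (0:ℝ) < 1 - lam ^ 2 := by nlinarith
  -- pointwise squared recursion
  have hsq : ∀ i, s (i + 1) ^ 2 ≤ lam * s i ^ 2 + t i ^ 2 / (1 - lam) := by
    intro i
    have h0 : s (i+1) ^ 2 ≤ (lam * s i + t i) ^ 2 := by
      have := hrec i
      nlinarith [hs (i+1), hs i, ht i]
    have hc : (1 - lam) * (t i ^ 2 / (1 - lam)) = t i ^ 2 := by field_simp
    have h2 : (lam * s i + t i) ^ 2 ≤ lam * s i ^ 2 + t i ^ 2 / (1 - lam) := by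
      nlinarith [mul_nonneg hlam.le (sq_nonneg ((1 - lam) * s i - t i)),
        div_nonneg (sq_nonneg (t i)) h1.le]
    linarith
  set A := ∑ i ∈ Finset.range (k + 1), (s i) ^ 2 with hA
  set B := ∑ i ∈ Finset.range (k + 1), (t i) ^ 2 with hB
  have hAnn : 0 ≤ A := Finset.sum_nonneg fun i _ => sq_nonneg _
  have hBnn : 0 ≤ B := Finset.sum_nonneg fun i _ => sq_nonneg _
  -- key bound on A
  have key : A ≤ B / (1 - lam) ^ 2 + s 0 ^ 2 / (1 - lam) := by
    have hsum : A = s 0 ^ 2 + ∑ i ∈ Finset.range k, s (i + 1) ^ 2 := by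
      rw [hA, Finset.sum_range_succ', add_comm]
    have h3 : ∑ i ∈ Finset.range k, s (i + 1) ^ 2
        ≤ ∑ i ∈ Finset.range k, (lam * s i ^ 2 + t i ^ 2 / (1 - lam)) :=
      Finset.sum_le_sum fun i _ => hsq i
    have h4 : ∑ i ∈ Finset.range k, (lam * s i ^ 2 + t i ^ 2 / (1 - lam))
        = lam * (∑ i ∈ Finset.range k, s i ^ 2) + (∑ i ∈ Finset.range k, t i ^ 2) / (1 - lam) := by
      rw [Finset.sum_add_distrib, ← Finset.mul_sum, ← Finset.sum_div]
    have h5 : ∑ i ∈ Finset.range k, s i ^ 2 ≤ A := by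
      rw [hA]
      exact Finset.sum_le_sum_of_subset_of_nonneg
        (Finset.range_subset_range.2 (Nat.le_succ k)) (fun i _ _ => sq_nonneg _)
    have h6 : ∑ i ∈ Finset.range k, t i ^ 2 ≤ B := by
      rw [hB]
      exact Finset.sum_le_sum_of_subset_of_nonneg
        (Finset.range_subset_range.2 (Nat.le_succ k)) (fun i _ _ => sq_nonneg _)
    have h6' : (∑ i ∈ Finset.range k, t i ^ 2) / (1 - lam) ≤ B / (1 - lam) := by gcongr
    have h7 : (1 - lam) * A ≤ s 0 ^ 2 + B / (1 - lam) := by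
      have h8 := h3.trans (le_of_eq h4)
      nlinarith [mul_le_mul_of_nonneg_left h5 hlam.le]
    have hc1 : (1 - lam) ^ 2 * (B / (1 - lam) ^ 2) = B := by field_simp
    have hc2 : (1 - lam) * (s 0 ^ 2 / (1 - lam)) = s 0 ^ 2 := by field_simp
    have hc3 : (1 - lam) * (B / (1 - lam)) = B := by field_simp
    nlinarith [mul_le_mul_of_nonneg_left h7 h1.le, mul_pos h1 h1]
  -- take square roots
  have step1 : Real.sqrt A ≤ Real.sqrt (B / (1-lam)^2) + Real.sqrt (s 0 ^ 2 / (1-lam)) :=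
    (Real.sqrt_le_sqrt key).trans (sqrt_add_le' (by positivity) (by positivity))
  have e1 : Real.sqrt (B / (1-lam)^2) = Real.sqrt B / (1-lam) := by
    rw [Real.sqrt_div hBnn, Real.sqrt_sq h1.le]
  have e2 : Real.sqrt (s 0 ^ 2 / (1-lam)) = s 0 / Real.sqrt (1-lam) := by
    rw [Real.sqrt_div (sq_nonneg _), Real.sqrt_sq (hs 0)]
  have h2ge1 : (1:ℝ) ≤ Real.sqrt 2 := by
    rw [show (1:ℝ) = Real.sqrt 1 by simp]
    exact Real.sqrt_le_sqrt (by norm_num)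
  have c1 : Real.sqrt B / (1-lam) ≤ (Real.sqrt 2 / (1-lam)) * Real.sqrt B := by
    rw [div_mul_eq_mul_div]
    gcongr
    nlinarith [Real.sqrt_nonneg B]
  have hw : 1 - lam ^ 2 ≤ Real.sqrt 2 * Real.sqrt (1 - lam) := by
    rw [← Real.sqrt_mul (by norm_num : (0:ℝ) ≤ 2),
      show (1 - lam ^ 2 : ℝ) = Real.sqrt ((1 - lam ^ 2) ^ 2) from (Real.sqrt_sq hz.le).symm]
    apply Real.sqrt_le_sqrt
    nlinarith
  have hsqpos : 0 < Real.sqrt (1 - lam) := Real.sqrt_pos.2 h1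
  have c2 : s 0 / Real.sqrt (1-lam) ≤ (Real.sqrt 2 / (1 - lam ^ 2)) * s 0 := by
    rw [div_mul_eq_mul_div, div_le_div_iff₀ hsqpos hz]
    nlinarith [mul_le_mul_of_nonneg_left hw (hs 0)]
  linarith [step1, e1 ▸ c1, e2 ▸ c2]
end

section
/- Let θ₁ = √2·λ·α_max(1+δ_α)/(1-λ) and θ₂ = √2·L(1+λ)/(1-λ̃) with λ̃ = λ + λLα_max(1+δ_α). If α_max < (1-λ)²/((1+δ_α)Lλ(λ+3)), then λ̃ < 1 and θ₁θ₂ < 1. -/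
/-- With `θ₁ = √2·λ·α_max(1+δ_α)/(1-λ)`, `θ₂ = √2·L(1+λ)/(1-λ̃)`,
`λ̃ = λ + λLα_max(1+δ_α)`, if `α_max < (1-λ)²/((1+δ_α)Lλ(λ+3))` then
`λ̃ < 1` and `θ₁θ₂ < 1`. -/
theorem theta_product_lt_one (lam L δ αmax : ℝ)
    (hlam : 0 < lam) (hlam1 : lam < 1) (hL : 0 < L) (hδ : 0 ≤ δ) (hαmax : 0 < αmax)
    (h : αmax < (1 - lam) ^ 2 / ((1 + δ) * L * lam * (lam + 3))) :
    lam + lam * L * αmax * (1 + δ) < 1 ∧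
      (Real.sqrt 2 * lam * αmax * (1 + δ) / (1 - lam)) *
        (Real.sqrt 2 * L * (1 + lam) / (1 - (lam + lam * L * αmax * (1 + δ)))) < 1 := by
  have hs2 : Real.sqrt 2 * Real.sqrt 2 = 2 := Real.mul_self_sqrt (by norm_num)
  have hY : 0 < (1 + δ) * L * lam * (lam + 3) := by positivity
  have key : αmax * ((1 + δ) * L * lam * (lam + 3)) < (1 - lam) ^ 2 :=
    (lt_div_iff₀ hY).mp h
  have h1 : lam + lam * L * αmax * (1 + δ) < 1 := by nlinarith
  refine ⟨h1, ?_⟩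
  have hd1 : 0 < 1 - lam := by linarith
  have hd2 : 0 < 1 - (lam + lam * L * αmax * (1 + δ)) := by linarith
  rw [div_mul_div_comm, div_lt_one (by positivity)]
  have hexpr : Real.sqrt 2 * lam * αmax * (1 + δ) * (Real.sqrt 2 * L * (1 + lam)) =
      2 * (lam * L * αmax * (1 + δ)) * (1 + lam) := by
    linear_combination (lam * αmax * (1 + δ) * L * (1 + lam)) * hs2
  rw [hexpr]
  nlinarith
end
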